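/- arXiv:1605.09115 — 3 statements merged into one kernel-verified Lean document; each statement's English description precedes it below -/
import Mathlib

section
/- Let F be a finite set of directed firewalls, and define single firewall-path concatenation on F* so that the concatenation ab of two words a,b is their word concatenation if the valid-path conditions hold, and the special element φ otherwise, with φ·a = a·φ = φ for all a. Then this concatenation is associative on F* ∪ {φ}. -/
/-!
Validity of a concatenation is the conjunction of three conditions. Disjointness of the physical
firewalls is plainly associative. When both junctions of `x y z` connect, the zones of `x ++ y` are
those of `x` together with those of `y`, because the junction zone occurs in both, and likewise for
the zones after the first; so both bracketings impose the same conditions on `x`, `y` and `z`.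
An empty middle word makes both bracketings reduce to `validCat x z`.
-/

/-- A directed firewall: source zone, target zone, underlying physical firewall. -/
structure FW (Z W : Type) where
  src : Z
  tgt : Z
  fw  : W

/-- The sequence of zones `d₁, …, d_{n+1}` visited by a word of directed firewalls. -/
def zoneSeq {Z W : Type} (a : List (FW Z W)) : List Z :=
  a.map FW.src ++ (a.getLast?.elim [] fun t => [t.tgt])

/-- Validity conditions for concatenating two firewall words:
endpoints connect, no zone of the second word (other than its first) occurs in the
first word, and no physical firewall is traversed twice. -/
def validCat {Z W : Type} (a b : List (FW Z W)) : Prop :=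
  (∀ t ∈ a.getLast?, ∀ s ∈ b.head?, t.tgt = s.src) ∧
  (∀ z ∈ (zoneSeq b).tail, z ∉ zoneSeq a) ∧
  (∀ t ∈ a, ∀ s ∈ b, t.fw ≠ s.fw)

open Classical in
/-- Single firewall-path concatenation on `F* ∪ {φ}` (`none` is `φ`). -/
noncomputable def fcat {Z W : Type} :
    Option (List (FW Z W)) → Option (List (FW Z W)) → Option (List (FW Z W))
  | some x, some y => if validCat x y then some (x ++ y) else none
  | _, _ => none

section

variable {Z W : Type}

def Connects (a b : List (FW Z W)) : Prop :=
  ∀ t ∈ a.getLast?, ∀ s ∈ b.head?, t.tgt = s.src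

theorem validCat_iff {a b : List (FW Z W)} :
    validCat a b ↔ Connects a b ∧ (∀ w ∈ (zoneSeq b).tail, w ∉ zoneSeq a) ∧
      ∀ t ∈ a, ∀ s ∈ b, t.fw ≠ s.fw :=
  Iff.rfl

theorem connects_append_left {x y z : List (FW Z W)} (hy : y ≠ []) :
    Connects (x ++ y) z ↔ Connects y z := by
  rw [Connects, List.getLast?_append_of_ne_nil _ hy, Connects]

theorem connects_append_right {x y z : List (FW Z W)} (hy : y ≠ []) :
    Connects x (y ++ z) ↔ Connects x y := by
  rw [Connects, List.head?_append_of_ne_nil _ hy, Connects]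

@[simp] theorem zoneSeq_nil : zoneSeq ([] : List (FW Z W)) = [] := rfl

theorem mem_zoneSeq {a : List (FW Z W)} {w : Z} :
    w ∈ zoneSeq a ↔ w ∈ a.map FW.src ∨ ∃ t ∈ a.getLast?, t.tgt = w := by
  cases h : a.getLast? <;> simp [zoneSeq, h, eq_comm]

theorem mem_tail_zoneSeq {a : List (FW Z W)} {w : Z} :
    w ∈ (zoneSeq a).tail ↔ w ∈ (a.map FW.src).tail ∨ ∃ t ∈ a.getLast?, t.tgt = w := by
  rcases a with _ | ⟨u, a⟩
  · simp
  · cases h : (u :: a).getLast? <;> simp [zoneSeq, h, eq_comm]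

theorem mem_zoneSeq_append {x y : List (FW Z W)} (h : Connects x y) {w : Z} :
    w ∈ zoneSeq (x ++ y) ↔ w ∈ zoneSeq x ∨ w ∈ zoneSeq y := by
  rcases y with _ | ⟨s, ys⟩
  · simp
  have hlast : (∃ t ∈ x.getLast?, t.tgt = w) → w ∈ (s :: ys).map FW.src := by
    rintro ⟨t, ht, rfl⟩
    simp [h t ht s rfl]
  simp only [mem_zoneSeq, List.getLast?_append_of_ne_nil _ (List.cons_ne_nil s ys),
    List.map_append, List.mem_append]
  generalize (∃ t ∈ x.getLast?, t.tgt = w) = P at hlast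
  tauto

theorem mem_tail_zoneSeq_append {x y : List (FW Z W)} (h : Connects x y) {w : Z} :
    w ∈ (zoneSeq (x ++ y)).tail ↔ w ∈ (zoneSeq x).tail ∨ w ∈ (zoneSeq y).tail := by
  rcases y with _ | ⟨s, ys⟩
  · simp
  rcases x with _ | ⟨u, xs⟩
  · simp
  have hlast : (∃ t ∈ (u :: xs).getLast?, t.tgt = w) ↔ w = s.src := by
    simp [List.getLast?_eq_some_getLast, h _ (List.getLast?_eq_some_getLast _) s rfl, eq_comm]
  rw [mem_tail_zoneSeq, List.getLast?_append_of_ne_nil _ (List.cons_ne_nil s ys)]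
  simp only [mem_tail_zoneSeq, hlast, List.cons_append, List.map_cons, List.map_append,
    List.tail_cons, List.mem_append, List.mem_cons]
  tauto

theorem validCat_nil_left (b : List (FW Z W)) : validCat [] b := by
  simp [validCat]

theorem validCat_nil_right (a : List (FW Z W)) : validCat a [] := by
  simp [validCat]

theorem validCat_and_validCat_append_iff (x y z : List (FW Z W)) :
    validCat x y ∧ validCat (x ++ y) z ↔ validCat y z ∧ validCat x (y ++ z) := by
  rcases eq_or_ne y [] with rfl | hy
  · simp [validCat_nil_left, validCat_nil_right]
  by_cases hxy : Connects x y
  · by_cases hyz : Connects y z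
    · simp only [validCat_iff, connects_append_left hy, connects_append_right hy, hxy, hyz,
        mem_zoneSeq_append hxy, mem_tail_zoneSeq_append hyz, List.mem_append, or_imp,
        forall_and, not_or, true_and]
      tauto
    · simp [validCat_iff, connects_append_left hy, hyz]
  · simp [validCat_iff, connects_append_right hy, hxy]

@[simp] theorem fcat_none_left (b : Option (List (FW Z W))) : fcat none b = none := by
  cases b <;> rfl

@[simp] theorem fcat_none_right (a : Option (List (FW Z W))) : fcat a none = none := by
  cases a <;> rfl

open Classical in
theorem fcat_fcat_some_some (x y z : List (FW Z W)) :
    fcat (fcat (some x) (some y)) (some z) =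
      if validCat x y ∧ validCat (x ++ y) z then some (x ++ y ++ z) else none := by
  by_cases hxy : validCat x y <;> simp [fcat, hxy]

open Classical in
theorem fcat_some_fcat_some (x y z : List (FW Z W)) :
    fcat (some x) (fcat (some y) (some z)) =
      if validCat y z ∧ validCat x (y ++ z) then some (x ++ (y ++ z)) else none := by
  by_cases hyz : validCat y z <;> simp [fcat, hyz]

end

theorem fcat_assoc_general {Z W : Type}
    (a b c : Option (List (FW Z W))) :
    fcat (fcat a b) c = fcat a (fcat b c) := by
  rcases a with _ | x
  · simp
  rcases b with _ | y
  · simp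
  rcases c with _ | z
  · simp
  rw [fcat_fcat_some_some, fcat_some_fcat_some, List.append_assoc]
  exact open Classical in if_congr (validCat_and_validCat_append_iff x y z) rfl rfl

/-- single firewall-path concatenation (with absorbing element `φ`)
is associative on `F* ∪ {φ}`, for a finite alphabet of directed firewalls. -/
theorem fcat_assoc {Z W : Type} [Finite Z] [Finite W]
    (a b c : Option (List (FW Z W))) :
    fcat (fcat a b) c = fcat a (fcat b c) :=
  fcat_assoc_general a b c
end

section
/- Let S be the power set of F* (sets of firewall paths), with addition given by set union and multiplication given by elementwise path concatenation a·b = {xy : x ∈ a, y ∈ b} \ {φ}. Then (S, ∪, ·, ∅, {ε}) is an idempotent semiring: union is associative, commutative, idempotent with identity ∅; multiplication is associative with identity {ε}; multiplication distributes over union on both sides; and ∅ is a two-sided multiplicative annihilator. -/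
/-- Elementwise path concatenation of sets of firewall paths: all valid
concatenations `xy` with `x ∈ a`, `y ∈ b` (invalid ones, i.e. `φ`, discarded). -/
def smul {Z W : Type} (a b : Set (List (FW Z W))) : Set (List (FW Z W)) :=
  {w | ∃ x ∈ a, ∃ y ∈ b, fcat (some x) (some y) = some w}

/-! Once the endpoints of `x`, `y`, `z` connect, the zone sequence of a concatenation is
the zone sequence of the first word followed by the tail of that of the second. Both
`validCat x y ∧ validCat (x ++ y) z` and `validCat y z ∧ validCat x (y ++ z)` then say
that the tails of the zone sequences of `y` and `z` avoid each other and the zones of `x`,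
and that the three words use pairwise distinct physical firewalls. So single-path
concatenation is associative, and the set product inherits this; the remaining semiring
laws are set bookkeeping. -/

section Lists

variable {α : Type*}

theorem forall_mem_append_assoc (R : α → α → Prop) (x y z : List α) :
    ((∀ t ∈ x, ∀ s ∈ y, R t s) ∧ ∀ t ∈ x ++ y, ∀ s ∈ z, R t s) ↔
      ((∀ t ∈ y, ∀ s ∈ z, R t s) ∧ ∀ t ∈ x, ∀ s ∈ y ++ z, R t s) := by
  simp only [List.mem_append, or_imp, forall_and]
  tauto

theorem disjoint_append_swap_of_mem {X Y Z : List α} {h : α} (hh : h ∈ X) :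
    (Y.Disjoint X ∧ Z.Disjoint (X ++ Y)) ↔ (Z.Disjoint (h :: Y) ∧ (Y ++ Z).Disjoint X) := by
  simp only [List.disjoint_append_left, List.disjoint_append_right, List.disjoint_cons_right]
  exact ⟨fun ⟨hYX, hZX, hZY⟩ => ⟨⟨fun hZ => hZX hZ hh, hZY⟩, hYX, hZX⟩,
    fun ⟨⟨_, hZY⟩, hYX, hZX⟩ => ⟨hYX, hZX, hZY⟩⟩

end Lists

namespace FW

variable {Z W : Type}

theorem validCat_nil_left (b : List (FW Z W)) : validCat [] b :=
  ⟨by simp, by simp [zoneSeq], by simp⟩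

theorem validCat_nil_right (a : List (FW Z W)) : validCat a [] :=
  ⟨by simp, by simp [zoneSeq], by simp⟩

theorem zoneSeq_of_ne_nil {a : List (FW Z W)} (ha : a ≠ []) :
    zoneSeq a = a.map FW.src ++ [(a.getLast ha).tgt] := by
  simp [zoneSeq, List.getLast?_eq_some_getLast ha]

theorem zoneSeq_eq_cons {a : List (FW Z W)} (ha : a ≠ []) :
    zoneSeq a = (a.head ha).src :: (zoneSeq a).tail := by
  obtain ⟨c, cs, rfl⟩ := List.exists_cons_of_ne_nil ha
  simp [zoneSeq]

theorem getLast_tgt_mem_zoneSeq {a : List (FW Z W)} (ha : a ≠ []) :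
    (a.getLast ha).tgt ∈ zoneSeq a := by
  simp [zoneSeq_of_ne_nil ha]

theorem zoneSeq_append {a b : List (FW Z W)} (hb : b ≠ []) :
    zoneSeq (a ++ b) = a.map FW.src ++ zoneSeq b := by
  simp [zoneSeq, List.getLast?_append_of_ne_nil _ hb]

theorem zoneSeq_append_of_connects {a b : List (FW Z W)} (ha : a ≠ []) (hb : b ≠ [])
    (hab : (a.getLast ha).tgt = (b.head hb).src) :
    zoneSeq (a ++ b) = zoneSeq a ++ (zoneSeq b).tail := by
  rw [zoneSeq_append hb, zoneSeq_of_ne_nil ha, hab, List.append_assoc, List.singleton_append,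
    ← zoneSeq_eq_cons hb]

theorem validCat_iff_of_ne_nil {a b : List (FW Z W)} (ha : a ≠ []) (hb : b ≠ []) :
    validCat a b ↔ (a.getLast ha).tgt = (b.head hb).src ∧
      (zoneSeq b).tail.Disjoint (zoneSeq a) ∧ ∀ t ∈ a, ∀ s ∈ b, t.fw ≠ s.fw := by
  simp only [validCat, List.getLast?_eq_some_getLast ha, List.head?_eq_some_head hb,
    Option.mem_def, Option.some.injEq, forall_eq']
  rfl

theorem validCat_assoc (x y z : List (FW Z W)) :
    (validCat x y ∧ validCat (x ++ y) z) ↔ (validCat y z ∧ validCat x (y ++ z)) := by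
  rcases eq_or_ne x [] with rfl | hx
  · simp [validCat_nil_left]
  rcases eq_or_ne y [] with rfl | hy
  · simp [validCat_nil_left, validCat_nil_right]
  rcases eq_or_ne z [] with rfl | hz
  · simp [validCat_nil_right]
  have hxy : x ++ y ≠ [] := by simp [hy]
  have hyz : y ++ z ≠ [] := by simp [hy]
  rw [validCat_iff_of_ne_nil hx hy, validCat_iff_of_ne_nil hxy hz, validCat_iff_of_ne_nil hy hz,
    validCat_iff_of_ne_nil hx hyz, List.getLast_append_of_ne_nil hxy hy,
    List.head_append_of_ne_nil hy]
  by_cases cxy : (x.getLast hx).tgt = (y.head hy).src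
  swap; · simp [cxy]
  by_cases cyz : (y.getLast hy).tgt = (z.head hz).src
  swap; · simp [cyz]
  have zones : ((zoneSeq y).tail.Disjoint (zoneSeq x) ∧
      (zoneSeq z).tail.Disjoint (zoneSeq (x ++ y))) ↔
      ((zoneSeq z).tail.Disjoint (zoneSeq y) ∧ (zoneSeq (y ++ z)).tail.Disjoint (zoneSeq x)) := by
    rw [zoneSeq_append_of_connects hx hy cxy, zoneSeq_append_of_connects hy hz cyz,
      List.tail_append_of_ne_nil (by simp [zoneSeq_of_ne_nil hy]), zoneSeq_eq_cons hy]
    exact disjoint_append_swap_of_mem (cxy ▸ getLast_tgt_mem_zoneSeq hx)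
  have firewalls := forall_mem_append_assoc (fun t s : FW Z W => t.fw ≠ s.fw) x y z
  simp only [cxy, cyz, true_and]
  tauto

open Classical in
theorem fcat_some_some (x y : List (FW Z W)) :
    fcat (some x) (some y) = if validCat x y then some (x ++ y) else none :=
  rfl

@[simp]
theorem fcat_none_left (p : Option (List (FW Z W))) : fcat none p = none := rfl

@[simp]
theorem fcat_none_right (p : Option (List (FW Z W))) : fcat p none = none := by
  cases p <;> rfl

theorem fcat_assoc (p q r : Option (List (FW Z W))) :
    fcat (fcat p q) r = fcat p (fcat q r) := by
  obtain _ | x := p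
  · simp
  obtain _ | y := q
  · simp
  obtain _ | z := r
  · simp
  by_cases hxy : validCat x y <;> by_cases hyz : validCat y z
  · have h : validCat (x ++ y) z ↔ validCat x (y ++ z) := by
      simpa [hxy, hyz] using validCat_assoc x y z
    simp only [fcat_some_some, hxy, hyz, if_true, List.append_assoc]
    split_ifs <;> tauto
  · have h : ¬validCat (x ++ y) z := fun h => hyz ((validCat_assoc x y z).1 ⟨hxy, h⟩).1
    simp [fcat_some_some, hxy, hyz, h]
  · have h : ¬validCat x (y ++ z) := fun h => hxy ((validCat_assoc x y z).2 ⟨hyz, h⟩).1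
    simp [fcat_some_some, hxy, hyz, h]
  · simp [fcat_some_some, hxy, hyz]

theorem mem_smul_smul_iff (a b c : Set (List (FW Z W))) (w : List (FW Z W)) :
    w ∈ smul (smul a b) c ↔
      ∃ x ∈ a, ∃ y ∈ b, ∃ z ∈ c, fcat (fcat (some x) (some y)) (some z) = some w := by
  constructor
  · rintro ⟨v, ⟨x, hx, y, hy, hxy⟩, z, hz, hvz⟩
    exact ⟨x, hx, y, hy, z, hz, hxy ▸ hvz⟩
  · rintro ⟨x, hx, y, hy, z, hz, h⟩
    rcases hxy : fcat (some x) (some y) with _ | v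
    · simp [hxy] at h
    · exact ⟨v, ⟨x, hx, y, hy, hxy⟩, z, hz, hxy ▸ h⟩

theorem mem_smul_smul_iff' (a b c : Set (List (FW Z W))) (w : List (FW Z W)) :
    w ∈ smul a (smul b c) ↔
      ∃ x ∈ a, ∃ y ∈ b, ∃ z ∈ c, fcat (some x) (fcat (some y) (some z)) = some w := by
  constructor
  · rintro ⟨x, hx, v, ⟨y, hy, z, hz, hyz⟩, hxv⟩
    exact ⟨x, hx, y, hy, z, hz, hyz ▸ hxv⟩
  · rintro ⟨x, hx, y, hy, z, hz, h⟩
    rcases hyz : fcat (some y) (some z) with _ | v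
    · simp [hyz] at h
    · exact ⟨x, hx, v, ⟨y, hy, z, hz, hyz⟩, hyz ▸ h⟩

theorem smul_assoc (a b c : Set (List (FW Z W))) : smul (smul a b) c = smul a (smul b c) := by
  ext w
  simp only [mem_smul_smul_iff, mem_smul_smul_iff', fcat_assoc]

theorem nil_smul (a : Set (List (FW Z W))) : smul {[]} a = a := by
  ext w
  simp [smul, fcat_some_some, validCat_nil_left]

theorem smul_nil (a : Set (List (FW Z W))) : smul a {[]} = a := by
  ext w
  simp [smul, fcat_some_some, validCat_nil_right]

theorem smul_union (a b c : Set (List (FW Z W))) : smul a (b ∪ c) = smul a b ∪ smul a c := by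
  ext w
  simp only [smul, Set.mem_union, Set.mem_ofPred_eq, or_and_right, exists_or, and_or_left]

theorem union_smul (a b c : Set (List (FW Z W))) : smul (a ∪ b) c = smul a c ∪ smul b c := by
  ext w
  simp only [smul, Set.mem_union, Set.mem_ofPred_eq, or_and_right, exists_or]

theorem empty_smul (a : Set (List (FW Z W))) : smul ∅ a = ∅ := by
  simp [smul]

theorem smul_empty (a : Set (List (FW Z W))) : smul a ∅ = ∅ := by
  simp [smul]

end FW

theorem pathSets_idempotent_semiring_general {Z W : Type} :
    (∀ a b c : Set (List (FW Z W)), (a ∪ b) ∪ c = a ∪ (b ∪ c)) ∧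
    (∀ a b : Set (List (FW Z W)), a ∪ b = b ∪ a) ∧
    (∀ a : Set (List (FW Z W)), a ∪ a = a) ∧
    (∀ a : Set (List (FW Z W)), ∅ ∪ a = a ∧ a ∪ ∅ = a) ∧
    (∀ a b c : Set (List (FW Z W)), smul (smul a b) c = smul a (smul b c)) ∧
    (∀ a : Set (List (FW Z W)), smul {([] : List (FW Z W))} a = a ∧
      smul a {([] : List (FW Z W))} = a) ∧
    (∀ a b c : Set (List (FW Z W)), smul a (b ∪ c) = smul a b ∪ smul a c) ∧
    (∀ a b c : Set (List (FW Z W)), smul (a ∪ b) c = smul a c ∪ smul b c) ∧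
    (∀ a : Set (List (FW Z W)), smul ∅ a = ∅ ∧ smul a ∅ = ∅) :=
  ⟨Set.union_assoc, Set.union_comm, Set.union_self,
    fun a => ⟨Set.empty_union a, Set.union_empty a⟩, FW.smul_assoc,
    fun a => ⟨FW.nil_smul a, FW.smul_nil a⟩, FW.smul_union, FW.union_smul,
    fun a => ⟨FW.empty_smul a, FW.smul_empty a⟩⟩

/-- `(S, ∪, ·, ∅, {ε})`, where `S` is the power set of `F*` with union as
addition and elementwise valid-concatenation as multiplication, is an idempotent
semiring. -/
theorem pathSets_idempotent_semiring {Z W : Type} [Finite Z] [Finite W] :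
    (∀ a b c : Set (List (FW Z W)), (a ∪ b) ∪ c = a ∪ (b ∪ c)) ∧
    (∀ a b : Set (List (FW Z W)), a ∪ b = b ∪ a) ∧
    (∀ a : Set (List (FW Z W)), a ∪ a = a) ∧
    (∀ a : Set (List (FW Z W)), ∅ ∪ a = a ∧ a ∪ ∅ = a) ∧
    (∀ a b c : Set (List (FW Z W)), smul (smul a b) c = smul a (smul b c)) ∧
    (∀ a : Set (List (FW Z W)), smul {([] : List (FW Z W))} a = a ∧
      smul a {([] : List (FW Z W))} = a) ∧
    (∀ a b c : Set (List (FW Z W)), smul a (b ∪ c) = smul a b ∪ smul a c) ∧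
    (∀ a b c : Set (List (FW Z W)), smul (a ∪ b) c = smul a c ∪ smul b c) ∧
    (∀ a : Set (List (FW Z W)), smul ∅ a = ∅ ∧ smul a ∅ = ∅) :=
  pathSets_idempotent_semiring_general
end

section
/- In a zone graph where some zone z is non-transitive (T(z,z) = ∅), the fixed point A* computed by the right iteration contains no path with z as an intermediate zone: for all i ≠ z, j ≠ z, every path in A*(i,j) avoids z as an interior vertex; consequently, entrywise, A*_T ⊆ A*_I where A*_T is computed with the transitivity matrix T and A*_I with T replaced by the identity I. -/
/-- `n × n` matrices over the firewall-path semiring `S`. -/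
abbrev PMat (n : ℕ) (Z W : Type) := Fin n → Fin n → Set (List (FW Z W))

/-- Entrywise matrix addition (union). -/
def madd {n : ℕ} {Z W : Type} (A B : PMat n Z W) : PMat n Z W :=
  fun i j => A i j ∪ B i j

/-- Matrix multiplication over `S`: `(AB)(i,k) = ⋃ j, A(i,j) · B(j,k)`. -/
def mmul {n : ℕ} {Z W : Type} (A B : PMat n Z W) : PMat n Z W :=
  fun i k => ⋃ j, smul (A i j) (B j k)

/-- The multiplicative identity matrix `I`: `{ε}` on the diagonal, `∅` elsewhere. -/
def mI (n : ℕ) (Z W : Type) : PMat n Z W :=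
  fun i j => if i = j then {[]} else ∅

/-- The all-`∅` matrix. -/
def mZero (n : ℕ) (Z W : Type) : PMat n Z W := fun _ _ => ∅

/-- The right iteration `A⁽⁰⁾ = I`, `A⁽ᵏ⁺¹⁾ = (A⁽ᵏ⁾ T ∪ I) A`. -/
def iterR {n : ℕ} {Z W : Type} (A T : PMat n Z W) : ℕ → PMat n Z W
  | 0 => mI n Z W
  | k + 1 => mmul (madd (mmul (iterR A T k) T) (mI n Z W)) A

/-- Matrix powers `Aᵐ`. -/
def mpow {n : ℕ} {Z W : Type} (A : PMat n Z W) : ℕ → PMat n Z W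
  | 0 => mI n Z W
  | m + 1 => mmul (mpow A m) A

/-- `w` is a firewall path from zone `i` to zone `j`: its hops chain up, starting at
`i` and ending at `j` (the empty path goes from `i` to `i`). -/
def isPath {n : ℕ} {W : Type} (i j : Fin n) (w : List (FW (Fin n) W)) : Prop :=
  w.map FW.src ++ [j] = i :: w.map FW.tgt

/-- A valid firewall path: elementary (no repeated zone) and no physical firewall
traversed twice. -/
def validW {n : ℕ} {W : Type} (w : List (FW (Fin n) W)) : Prop :=
  (zoneSeq w).Nodup ∧ (w.map FW.fw).Nodup

/-!
A path of stage `k + 1` of the right iteration is a path of stage `k`, passed through `T`, followed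
by one hop. Passing through `T` keeps a path only if its last zone is not `z`, and that last zone is
the only one the new hop turns into an interior zone; so `z` never becomes interior. Since `T` lies
below the identity, monotonicity of the iteration in `T` gives `A*_T ⊆ A*_I`.
-/

section

variable {n : ℕ} {W : Type}

lemma mem_smul_iff {Z : Type} {a b : Set (List (FW Z W))} {w : List (FW Z W)} :
    w ∈ smul a b ↔ ∃ x ∈ a, ∃ y ∈ b, validCat x y ∧ x ++ y = w := by
  simp only [smul, fcat, Set.mem_ofPred_eq, Option.ite_none_right_eq_some, Option.some.injEq]

lemma smul_mono {Z : Type} {a a' b b' : Set (List (FW Z W))} (ha : a ⊆ a') (hb : b ⊆ b') :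
    smul a b ⊆ smul a' b' := by
  rintro w ⟨x, hx, y, hy, h⟩
  exact ⟨x, ha hx, y, hb hy, h⟩

lemma iterR_mono {Z : Type} (A : PMat n Z W) {T T' : PMat n Z W} (hT : ∀ i j, T i j ⊆ T' i j)
    (k : ℕ) (i j : Fin n) : iterR A T k i j ⊆ iterR A T' k i j := by
  induction k generalizing j with
  | zero => exact subset_rfl
  | succ k ih =>
    refine Set.iUnion_mono fun m => smul_mono (Set.union_subset_union ?_ subset_rfl) subset_rfl
    exact Set.iUnion_mono fun p => smul_mono (ih p) (hT p m)

def BlocksTransit (T : PMat n (Fin n) W) (z : Fin n) : Prop :=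
  ∀ p m, ∀ x ∈ T p m, p = m ∧ m ≠ z ∧ x = []

namespace BlocksTransit

variable {T : PMat n (Fin n) W} {z : Fin n}

lemma of_diagonal (hT_off : ∀ i j : Fin n, i ≠ j → T i j = ∅) (hTz : T z z = ∅)
    (hT_other : ∀ i : Fin n, i ≠ z → T i i = {([] : List (FW (Fin n) W))}) :
    BlocksTransit T z := by
  intro p m x hx
  obtain rfl | hpm := eq_or_ne p m
  · obtain rfl | hpz := eq_or_ne p z
    · simp [hTz] at hx
    · exact ⟨rfl, hpz, by simpa [hT_other p hpz] using hx⟩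
  · simp [hT_off p m hpm] at hx

lemma subset_mI (hT : BlocksTransit T z) (p m : Fin n) : T p m ⊆ mI n (Fin n) W p m := by
  intro x hx
  obtain ⟨rfl, -, rfl⟩ := hT p m x hx
  simp [mI]

lemma mem_mmul {B : PMat n (Fin n) W} {i m : Fin n} {x : List (FW (Fin n) W)}
    (hT : BlocksTransit T z) (hx : x ∈ mmul B T i m) : m ≠ z ∧ x ∈ B i m := by
  obtain ⟨p, hp⟩ := Set.mem_iUnion.mp hx
  obtain ⟨x', hx', e, he, -, rfl⟩ := mem_smul_iff.mp hp
  obtain ⟨rfl, hmz, rfl⟩ := hT p m e he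
  simpa [hmz] using hx'

end BlocksTransit

lemma notMem_tail_append_singleton {α : Type*} {a m : α} {l : List α}
    (hl : a ∉ l.tail) (ham : a ≠ m) : a ∉ (l ++ [m]).tail := by
  cases l <;> simp_all

lemma notMem_tail_map_src_of_mem_iterR (A : PMat n (Fin n) W) {T : PMat n (Fin n) W} {z : Fin n}
    (hA : ∀ i j, ∀ w ∈ A i j, ∃ t : FW (Fin n) W, w = [t] ∧ t.src = i)
    (hT : BlocksTransit T z) (k : ℕ) (i j : Fin n) :
    ∀ w ∈ iterR A T k i j, z ∉ (w.map FW.src).tail := by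
  induction k generalizing j with
  | zero =>
    intro w hw
    by_cases hij : i = j <;> simp_all [iterR, mI]
  | succ k ih =>
    intro w hw
    obtain ⟨m, hm⟩ := Set.mem_iUnion.mp hw
    obtain ⟨x, hx, y, hy, -, rfl⟩ := mem_smul_iff.mp hm
    obtain ⟨t, rfl, rfl⟩ := hA _ j y hy
    rw [List.map_append, List.map_singleton]
    rcases hx with hx | hx
    · obtain ⟨hmz, hx⟩ := hT.mem_mmul hx
      exact notMem_tail_append_singleton (ih _ x hx) (Ne.symm hmz)
    · by_cases him : i = t.src <;> simp_all [mI]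

end

/-- if zone `z` is non-transitive (`T(z,z) = ∅`, all other diagonal
entries `{ε}`, off-diagonal `∅`) and `A` is the generalized adjacency matrix of
one-hop paths, then the fixed point `A* = A⁽ⁿ⁻¹⁾` computed with `T` contains no path
having `z` as an intermediate zone, and entrywise `A*_T ⊆ A*_I` where `A*_I` is
computed with `T` replaced by the identity. -/
theorem nontransitive_zone_avoided {n : ℕ} {W : Type}
    (A T : PMat n (Fin n) W) (z : Fin n)
    (hA : ∀ (i j : Fin n), ∀ w ∈ A i j, ∃ t : FW (Fin n) W,
      w = [t] ∧ t.src = i ∧ t.tgt = j)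
    (hT_off : ∀ i j : Fin n, i ≠ j → T i j = ∅)
    (hTz : T z z = ∅)
    (hT_other : ∀ i : Fin n, i ≠ z → T i i = {([] : List (FW (Fin n) W))}) :
    (∀ i j : Fin n, i ≠ z → j ≠ z →
      ∀ w ∈ iterR A T (n - 1) i j, z ∉ (w.map FW.src).tail) ∧
    (∀ i j : Fin n,
      iterR A T (n - 1) i j ⊆ iterR A (mI n (Fin n) W) (n - 1) i j) := by
  have hT : BlocksTransit T z := .of_diagonal hT_off hTz hT_other
  have hA' : ∀ i j, ∀ w ∈ A i j, ∃ t : FW (Fin n) W, w = [t] ∧ t.src = i :=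
    fun i j w hw => (hA i j w hw).imp fun _ ht => ⟨ht.1, ht.2.1⟩
  exact ⟨fun i j _ _ => notMem_tail_map_src_of_mem_iterR A hA' hT (n - 1) i j,
    iterR_mono A hT.subset_mI (n - 1)⟩
end
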